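/- Let A be the adjacency matrix of a connected undirected graph on N vertices, fix τ₂ > 0, and let x, y : ℝ → ℝ^N be differentiable at a point τ₁ > 0, with 0 < x_i(τ), 0 < y_i(τ) and x_i(τ) + y_i(τ) < 1 for all i, for τ in a neighborhood of τ₁, and suppose that for every such τ the coexistence fixed point equation Σ_j A_{ij} x_j(τ) = x_i(τ)/(τ(1 − x_i(τ) − y_i(τ))) holds for all i. If x_j'(τ₁) > 0 for all j, then for every i one has (1 − y_i(τ₁))·x_i'(τ₁) + x_i(τ₁)·y_i'(τ₁) > 0; in particular the derivative of τ ↦ x_i(τ)/(1 − y_i(τ)) at τ₁ is strictly positive for every i, i.e., x_i/(1 − y_i) strictly increases in the effective infection rate τ₁ of Virus 1. -/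

import Mathlib

open Matrix Finset

/-- Spectral radius of a real matrix: supremum of absolute values of its complex eigenvalues. -/
noncomputable def specRad {N : ℕ} (M : Matrix (Fin N) (Fin N) ℝ) : ℝ :=
  sSup ((fun z => ‖z‖) '' spectrum ℂ (M.map Complex.ofReal))

/-- `A` is the adjacency matrix of a connected undirected graph:
symmetric, 0/1 entries, zero diagonal, and irreducible (connectivity). -/
def IsConnectedAdjMatrix {N : ℕ} (A : Matrix (Fin N) (Fin N) ℝ) : Prop :=
  A.IsSymm ∧ (∀ i j, A i j = 0 ∨ A i j = 1) ∧ (∀ i, A i i = 0) ∧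
    (∀ i j, i ≠ j → ∃ k : ℕ, 0 < (A ^ k) i j)

/-- `x` satisfies the single-virus SIS fixed point equations for `(A, τ)`. -/
def IsSISFixedPoint {N : ℕ} (A : Matrix (Fin N) (Fin N) ℝ) (τ : ℝ)
    (x : Fin N → ℝ) : Prop :=
  (∀ i, 0 < x i ∧ x i < 1) ∧ (∀ i, ∑ j, A i j * x j = x i / (τ * (1 - x i)))

/-!
Write `S(τ) = Σ_j A_ij x_j(τ)`. Differentiating the fixed point equation
`S(τ) = x_i / (τ (1 - x_i - y_i))` at `τ₁` and clearing denominators gives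
`τ₁ ((1 - y_i) x_i' + x_i y_i') = S'(τ₁) (τ₁ (1 - x_i - y_i))² + x_i (1 - x_i - y_i)`,
where `S'(τ₁) = Σ_j A_ij x_j'(τ₁) ≥ 0` because `A` is nonnegative. The right-hand side is therefore
positive, and `(1 - y_i) x_i' + x_i y_i'` is, up to the positive factor `(1 - y_i)²`, the
derivative of `x_i / (1 - y_i)`.
-/

lemma IsConnectedAdjMatrix.nonneg {N : ℕ} {A : Matrix (Fin N) (Fin N) ℝ}
    (hA : IsConnectedAdjMatrix A) (i j : Fin N) : 0 ≤ A i j := by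
  rcases hA.2.1 i j with h | h <;> simp [h]

section Calculus

variable {g h : ℝ → ℝ} {g' h' t : ℝ}

lemma HasDerivAt.div_one_sub (hg : HasDerivAt g g' t) (hh : HasDerivAt h h' t)
    (hh1 : h t ≠ 1) :
    HasDerivAt (fun τ => g τ / (1 - h τ)) (((1 - h t) * g' + g t * h') / (1 - h t) ^ 2) t :=
  (hg.fun_div (hh.const_sub 1) (sub_ne_zero.mpr hh1.symm)).congr_deriv (by ring)

lemma HasDerivAt.div_mul_one_sub_sub (hg : HasDerivAt g g' t) (hh : HasDerivAt h h' t)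
    (hden : t * (1 - g t - h t) ≠ 0) :
    HasDerivAt (fun τ => g τ / (τ * (1 - g τ - h τ)))
      ((t * ((1 - h t) * g' + g t * h') - g t * (1 - g t - h t)) / (t * (1 - g t - h t)) ^ 2)
      t :=
  (hg.fun_div ((hasDerivAt_id' t).fun_mul ((hg.const_sub 1).fun_sub hh)) hden).congr_deriv
    (by ring)

lemma one_sub_mul_add_mul_pos_of_eventuallyEq_div {F : ℝ → ℝ} {S : ℝ}
    (hF : HasDerivAt F S t) (hg : HasDerivAt g g' t) (hh : HasDerivAt h h' t)
    (hFg : F =ᶠ[nhds t] fun τ => g τ / (τ * (1 - g τ - h τ)))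
    (ht : 0 < t) (hg0 : 0 < g t) (hgh : g t + h t < 1) (hS : 0 ≤ S) :
    0 < (1 - h t) * g' + g t * h' := by
  have hs : 0 < 1 - g t - h t := by linarith
  have hden : t * (1 - g t - h t) ≠ 0 := by positivity
  have hSeq := hF.unique ((hg.div_mul_one_sub_sub hh hden).congr_of_eventuallyEq hFg)
  rw [eq_div_iff (pow_ne_zero 2 hden)] at hSeq
  have key : 0 < t * ((1 - h t) * g' + g t * h') := by
    nlinarith [mul_pos hg0 hs, mul_nonneg hS (sq_nonneg (t * (1 - g t - h t)))]
  exact pos_of_mul_pos_right key ht.le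

end Calculus

theorem gi_increasing_in_tau1_general {N : ℕ}
    (A : Matrix (Fin N) (Fin N) ℝ) (hA : IsConnectedAdjMatrix A)
    (τ₁ : ℝ) (hτ₁ : 0 < τ₁)
    (x y : ℝ → Fin N → ℝ)
    (hdx : ∀ i, DifferentiableAt ℝ (fun τ => x τ i) τ₁)
    (hdy : ∀ i, DifferentiableAt ℝ (fun τ => y τ i) τ₁)
    (hnbhd : ∀ᶠ τ in nhds τ₁,
      (∀ i, 0 < x τ i ∧ 0 < y τ i ∧ x τ i + y τ i < 1) ∧
      (∀ i, ∑ j, A i j * x τ j = x τ i / (τ * (1 - x τ i - y τ i))))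
    (hx' : ∀ j, 0 < deriv (fun τ => x τ j) τ₁) :
    ∀ i, 0 < (1 - y τ₁ i) * deriv (fun τ => x τ i) τ₁ +
        x τ₁ i * deriv (fun τ => y τ i) τ₁ ∧
      0 < deriv (fun τ => x τ i / (1 - y τ i)) τ₁ := by
  intro i
  obtain ⟨hx0, -, hxy⟩ := hnbhd.self_of_nhds.1 i
  have hS : HasDerivAt (fun τ => ∑ j, A i j * x τ j)
      (∑ j, A i j * deriv (fun τ => x τ j) τ₁) τ₁ :=
    HasDerivAt.fun_sum fun j _ => (hdx j).hasDerivAt.const_mul (A i j)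
  have hS0 : 0 ≤ ∑ j, A i j * deriv (fun τ => x τ j) τ₁ :=
    sum_nonneg fun j _ => mul_nonneg (hA.nonneg i j) (hx' j).le
  have hpos := one_sub_mul_add_mul_pos_of_eventuallyEq_div hS (hdx i).hasDerivAt
    (hdy i).hasDerivAt (hnbhd.mono fun τ h => h.2 i) hτ₁ hx0 hxy hS0
  have hy1 : y τ₁ i ≠ 1 := by linarith
  refine ⟨hpos, ?_⟩
  rw [((hdx i).hasDerivAt.div_one_sub (hdy i).hasDerivAt hy1).deriv]
  exact div_pos hpos (pow_pos (sub_pos.mpr (by linarith)) 2)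

/-- Let `A` be the adjacency matrix of a connected undirected graph on `N`
vertices, fix `τ₂ > 0`, and let `x, y : ℝ → ℝ^N` be differentiable at a point `τ₁ > 0`, with
`0 < x_i(τ)`, `0 < y_i(τ)` and `x_i(τ) + y_i(τ) < 1` for all `i`, for `τ` in a neighborhood of
`τ₁`, and suppose that for every such `τ` the coexistence fixed point equation
`Σ_j A_{ij} x_j(τ) = x_i(τ)/(τ(1 − x_i(τ) − y_i(τ)))` holds for all `i`. If `x_j'(τ₁) > 0`
for all `j`, then for every `i` one has
`(1 − y_i(τ₁))·x_i'(τ₁) + x_i(τ₁)·y_i'(τ₁) > 0`; in particular the derivative of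
`τ ↦ x_i(τ)/(1 − y_i(τ))` at `τ₁` is strictly positive for every `i`. -/
theorem gi_increasing_in_tau1 {N : ℕ}
    (A : Matrix (Fin N) (Fin N) ℝ) (hA : IsConnectedAdjMatrix A)
    (τ₁ τ₂ : ℝ) (hτ₁ : 0 < τ₁) (hτ₂ : 0 < τ₂)
    (x y : ℝ → Fin N → ℝ)
    (hdx : ∀ i, DifferentiableAt ℝ (fun τ => x τ i) τ₁)
    (hdy : ∀ i, DifferentiableAt ℝ (fun τ => y τ i) τ₁)
    (hnbhd : ∀ᶠ τ in nhds τ₁,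
      (∀ i, 0 < x τ i ∧ 0 < y τ i ∧ x τ i + y τ i < 1) ∧
      (∀ i, ∑ j, A i j * x τ j = x τ i / (τ * (1 - x τ i - y τ i))))
    (hx' : ∀ j, 0 < deriv (fun τ => x τ j) τ₁) :
    ∀ i, 0 < (1 - y τ₁ i) * deriv (fun τ => x τ i) τ₁ +
        x τ₁ i * deriv (fun τ => y τ i) τ₁ ∧
      0 < deriv (fun τ => x τ i / (1 - y τ i)) τ₁ :=
  gi_increasing_in_tau1_general A hA τ₁ hτ₁ x y hdx hdy hnbhd hx'
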